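/- The random Fibonacci subshift X₁ is semi-mixing with respect to S = {ab, ba}: for every ϑ₁-legal word w there exists N such that for all n ≥ N there exists a word u of length n with wu·ab or wu·ba a ϑ₁-legal word. Moreover {ab, ba} is a proper subset of the set of legal words of length 2 (since aa is also legal). -/

import Mathlib

/-- Two-letter alphabet. -/
inductive AB : Type
  | a : AB
  | b : AB
deriving DecidableEq

/-- Extension of a random substitution to words, by setwise concatenation. -/
def substW (θ : AB → Set (List AB)) : List AB → Set (List AB)
  | [] => {[]}
  | x :: w => {u | ∃ v ∈ θ x, ∃ t ∈ substW θ w, u = v ++ t}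

/-- Extension of a random substitution to sets of words. -/
def substS (θ : AB → Set (List AB)) (A : Set (List AB)) : Set (List AB) :=
  ⋃ w ∈ A, substW θ w

/-- Level-`n` inflation words of the letter `x`. -/
def substIter (θ : AB → Set (List AB)) (n : ℕ) (x : AB) : Set (List AB) :=
  (substS θ)^[n] {[x]}

/-- A word is legal if it is a subword of some level-`k` inflation word. -/
def legalW (θ : AB → Set (List AB)) (u : List AB) : Prop :=
  ∃ (k : ℕ) (x : AB), ∃ w ∈ substIter θ k x, u <:+: w

/-- The random Fibonacci substitution a ↦ {ab, ba}, b ↦ {a}. -/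
def randFib : AB → Set (List AB)
  | AB.a => {[AB.a, AB.b], [AB.b, AB.a]}
  | AB.b => {[AB.a]}

/-!
Write `ϑ₁ k x` for the level-`k` inflation words of `x`. The words of `ϑ₁ (k + 1) a` are
exactly the concatenations `ϑ₁ k a · ϑ₁ k b` and `ϑ₁ k b · ϑ₁ k a`, where `ϑ₁ (k + 1) b = ϑ₁ k a`,
and all words of `ϑ₁ k a` have length `fib (k + 2)`. The two splittings have their junctions at
different places, so by induction every inner position of a word of `ϑ₁ j a` can be made to carry
two distinct letters, i.e. `ab` or `ba`.

Now let `w` be an infix of `v ∈ ϑ₁ k a` and let `o ≥ |v|`. Choose `L` with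
`fib (L + 2) ≤ o < fib (L + 3)`. A word of `ϑ₁ (L + 2) a` may start with an extension of `v`
in `ϑ₁ (L + 1) b = ϑ₁ L a` and continue with a word of `ϑ₁ (L + 1) a` having distinct letters at
position `o`; this places `ab` or `ba` at every prescribed distance behind `w`. Finally `aa` is
legal, being an infix of `aab ∈ ϑ₁ 2 a`.
-/

open AB Set Nat

section Substitution

variable (θ : AB → Set (List AB))

theorem substW_append (u t : List AB) :
    substW θ (u ++ t) = image2 (· ++ ·) (substW θ u) (substW θ t) := by
  induction u with
  | nil => ext r; simp [substW]
  | cons x u ih =>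
    ext r
    simp only [List.cons_append, substW, ih, mem_image2]
    constructor
    · rintro ⟨v, hv, _, ⟨p, hp, q, hq, rfl⟩, rfl⟩
      exact ⟨v ++ p, ⟨v, hv, p, hp, rfl⟩, q, hq, List.append_assoc ..⟩
    · rintro ⟨_, ⟨v, hv, p, hp, rfl⟩, q, hq, rfl⟩
      exact ⟨v, hv, p ++ q, ⟨p, hp, q, hq, rfl⟩, List.append_assoc ..⟩

theorem substS_union (A B : Set (List AB)) :
    substS θ (A ∪ B) = substS θ A ∪ substS θ B :=
  biUnion_union A B _

theorem substS_image2_append (A B : Set (List AB)) :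
    substS θ (image2 (· ++ ·) A B) = image2 (· ++ ·) (substS θ A) (substS θ B) := by
  ext r
  simp only [substS, mem_iUnion, mem_image2, exists_prop]
  constructor
  · rintro ⟨_, ⟨u, hu, t, ht, rfl⟩, hr⟩
    obtain ⟨p, hp, q, hq, rfl⟩ := (substW_append θ u t ▸ hr : r ∈ image2 _ _ _)
    exact ⟨p, ⟨u, hu, hp⟩, q, ⟨t, ht, hq⟩, rfl⟩
  · rintro ⟨p, ⟨u, hu, hp⟩, q, ⟨t, ht, hq⟩, rfl⟩
    exact ⟨u ++ t, ⟨u, hu, t, ht, rfl⟩, substW_append θ u t ▸ mem_image2_of_mem hp hq⟩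

theorem iterate_substS_union (k : ℕ) (A B : Set (List AB)) :
    (substS θ)^[k] (A ∪ B) = (substS θ)^[k] A ∪ (substS θ)^[k] B := by
  induction k generalizing A B with
  | zero => rfl
  | succ k ih => simp only [Function.iterate_succ_apply, substS_union, ih]

theorem iterate_substS_image2_append (k : ℕ) (A B : Set (List AB)) :
    (substS θ)^[k] (image2 (· ++ ·) A B) =
      image2 (· ++ ·) ((substS θ)^[k] A) ((substS θ)^[k] B) := by
  induction k generalizing A B with
  | zero => rfl
  | succ k ih => simp only [Function.iterate_succ_apply, substS_image2_append, ih]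

theorem substIter_succ (k : ℕ) (x : AB) : substIter θ (k + 1) x = (substS θ)^[k] (θ x) := by
  have : substS θ {[x]} = θ x := by ext r; simp [substS, substW]
  rw [substIter, Function.iterate_succ_apply, this]

theorem substIter_nonempty (hθ : ∀ x, (θ x).Nonempty) (k : ℕ) (x : AB) :
    (substIter θ k x).Nonempty := by
  have substW_nonempty : ∀ w, (substW θ w).Nonempty := by
    intro w
    induction w with
    | nil => exact singleton_nonempty _
    | cons x w ih =>
      obtain ⟨v, hv⟩ := hθ x
      obtain ⟨t, ht⟩ := ih
      exact ⟨v ++ t, v, hv, t, ht, rfl⟩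
  induction k with
  | zero => exact singleton_nonempty _
  | succ k ih =>
    rw [substIter, Function.iterate_succ_apply']
    obtain ⟨w, hw⟩ := ih
    exact (substW_nonempty w).mono (subset_biUnion_of_mem hw)

end Substitution

namespace RandFib

local notation "ϑ₁" => substIter randFib

theorem substIter_succ_a (k : ℕ) :
    ϑ₁ (k + 1) a = image2 (· ++ ·) (ϑ₁ k a) (ϑ₁ k b) ∪ image2 (· ++ ·) (ϑ₁ k b) (ϑ₁ k a) := by
  have : randFib a = image2 (· ++ ·) {[a]} {[b]} ∪ image2 (· ++ ·) {[b]} {[a]} := by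
    ext; simp [randFib, or_comm]
  rw [substIter_succ, this, iterate_substS_union, iterate_substS_image2_append,
    iterate_substS_image2_append]
  rfl

theorem substIter_succ_b (k : ℕ) : ϑ₁ (k + 1) b = ϑ₁ k a := by
  rw [substIter_succ]
  rfl

theorem append_mem_of_mem_a_of_mem_b {k : ℕ} {u t : List AB} (hu : u ∈ ϑ₁ k a)
    (ht : t ∈ ϑ₁ k b) : u ++ t ∈ ϑ₁ (k + 1) a := by
  rw [substIter_succ_a]
  exact Or.inl (mem_image2_of_mem hu ht)

theorem append_mem_of_mem_b_of_mem_a {k : ℕ} {u t : List AB} (hu : u ∈ ϑ₁ k b)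
    (ht : t ∈ ϑ₁ k a) : u ++ t ∈ ϑ₁ (k + 1) a := by
  rw [substIter_succ_a]
  exact Or.inr (mem_image2_of_mem hu ht)

theorem substIter_nonempty (k : ℕ) (x : AB) : (ϑ₁ k x).Nonempty :=
  _root_.substIter_nonempty randFib (fun x => by cases x <;> simp [randFib]) k x

theorem length_eq_fib_of_mem (k : ℕ) :
    (∀ u ∈ ϑ₁ k a, u.length = fib (k + 2)) ∧ (∀ u ∈ ϑ₁ k b, u.length = fib (k + 1)) := by
  induction k with
  | zero => exact ⟨fun u hu => by rw [hu]; rfl, fun u hu => by rw [hu]; rfl⟩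
  | succ k ih =>
    refine ⟨fun u hu => ?_, fun u hu => ih.1 u (substIter_succ_b k ▸ hu)⟩
    have hfib : fib (k + 1 + 2) = fib (k + 1) + fib (k + 2) := fib_add_two
    rw [substIter_succ_a] at hu
    rcases hu with ⟨p, hp, q, hq, rfl⟩ | ⟨p, hp, q, hq, rfl⟩
    · rw [List.length_append, ih.1 p hp, ih.2 q hq, hfib, add_comm]
    · rw [List.length_append, ih.2 p hp, ih.1 q hq, hfib]

theorem exists_ne_pair_mem (j o : ℕ) (ho : o + 2 ≤ fib (j + 2)) :
    ∃ y c d z, y ++ c :: d :: z ∈ ϑ₁ j a ∧ y.length = o ∧ c ≠ d := by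
  induction j generalizing o with
  | zero => simp at ho
  | succ j ih =>
    have hfib : fib (j + 1 + 2) = fib (j + 1) + fib (j + 2) := fib_add_two
    rcases le_or_gt (o + 2) (fib (j + 2)) with hleft | hnot_left
    · obtain ⟨y, c, d, z, hW, hy, hcd⟩ := ih o hleft
      obtain ⟨t, ht⟩ := substIter_nonempty j b
      exact ⟨y, c, d, z ++ t, by simpa using append_mem_of_mem_a_of_mem_b hW ht, hy, hcd⟩
    rcases le_or_gt (fib (j + 1)) o with hright | hjunction
    · obtain ⟨y, c, d, z, hW, hy, hcd⟩ := ih (o - fib (j + 1)) (by omega)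
      obtain ⟨t, ht⟩ := substIter_nonempty j b
      refine ⟨t ++ y, c, d, z, by simpa using append_mem_of_mem_b_of_mem_a ht hW, ?_, hcd⟩
      rw [List.length_append, (length_eq_fib_of_mem j).2 t ht, hy]
      omega
    · -- the two decompositions of level `j + 1` have different junctions unless `j = 0`
      have hj : j = 0 := by
        by_contra hj
        have := fib_add_two (n := j)
        have := fib_pos.2 (Nat.pos_of_ne_zero hj)
        omega
      subst hj
      rw [show fib (0 + 1 + 2) = 2 from rfl] at ho
      exact ⟨[], a, b, [], append_mem_of_mem_a_of_mem_b (u := [a]) (t := [b]) rfl rfl,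
        by simp only [List.length_nil]; omega, by decide⟩

theorem exists_append_mem {k K : ℕ} {v : List AB} (hv : v ∈ ϑ₁ k a) (hK : k ≤ K) :
    ∃ y, v ++ y ∈ ϑ₁ K a := by
  induction K, hK using Nat.le_induction with
  | base => exact ⟨[], by simpa using hv⟩
  | succ K _ ih =>
    obtain ⟨y, hy⟩ := ih
    obtain ⟨t, ht⟩ := substIter_nonempty K b
    exact ⟨y ++ t, by simpa using append_mem_of_mem_a_of_mem_b hy ht⟩

theorem exists_ne_pair_mem_of_length_le {k o : ℕ} {v : List AB} (hv : v ∈ ϑ₁ k a)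
    (ho : v.length ≤ o) :
    ∃ K y c d z, v ++ y ++ c :: d :: z ∈ ϑ₁ K a ∧ (v ++ y).length = o ∧ c ≠ d := by
  rw [(length_eq_fib_of_mem k).1 v hv] at ho
  have hG : k + 2 ≤ greatestFib o := le_greatestFib.2 ho
  obtain ⟨L, hL⟩ : ∃ L, greatestFib o = L + 2 := ⟨greatestFib o - 2, by omega⟩
  have hkL : k ≤ L := by omega
  have hlow : fib (L + 2) ≤ o := hL ▸ fib_greatestFib_le o
  have hhigh : o < fib (L + 3) := by simpa [hL] using lt_fib_greatestFib_add_one o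
  have hfib : fib (L + 3) = fib (L + 1) + fib (L + 2) := fib_add_two
  obtain ⟨y, hy⟩ := exists_append_mem hv hkL
  obtain ⟨y', c, d, z, hW, hy', hcd⟩ := exists_ne_pair_mem (L + 1) (o - fib (L + 2)) (by
    have : 0 < fib (L + 2) := fib_pos.2 (by omega)
    change _ ≤ fib (L + 3)
    omega)
  refine ⟨L + 2, y ++ y', c, d, z, ?_, ?_, hcd⟩
  · have hW' := append_mem_of_mem_b_of_mem_a (substIter_succ_b L ▸ hy) hW
    simpa using hW'
  · rw [← List.append_assoc, List.length_append, (length_eq_fib_of_mem L).1 _ hy, hy']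
    omega

theorem exists_infix_mem_of_legalW {w : List AB} (hw : legalW randFib w) :
    ∃ k v, v ∈ ϑ₁ k a ∧ w <:+: v := by
  obtain ⟨k, x, u, hu, hwu⟩ := hw
  cases x with
  | a => exact ⟨k, u, hu, hwu⟩
  | b =>
    obtain ⟨t, ht⟩ := substIter_nonempty k a
    exact ⟨k + 1, u ++ t, append_mem_of_mem_b_of_mem_a hu ht,
      hwu.trans (List.prefix_append u t).isInfix⟩

end RandFib

/-- The random Fibonacci subshift is semi-mixing with respect to
`S = {ab, ba}`: for every legal word `w` there is `N` such that for every
`n ≥ N` there is a word `u` of length `n` with `wuab` or `wuba` legal.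
Moreover `{ab, ba}` is a proper subset of the legal words of length 2. -/
theorem randFib_semimixing :
    (∀ w : List AB, legalW randFib w →
      ∃ N : ℕ, ∀ n ≥ N, ∃ u : List AB, u.length = n ∧
        (legalW randFib (w ++ u ++ [AB.a, AB.b]) ∨
         legalW randFib (w ++ u ++ [AB.b, AB.a]))) ∧
    ({[AB.a, AB.b], [AB.b, AB.a]} : Set (List AB)) ⊂
      {v : List AB | v.length = 2 ∧ legalW randFib v} := by
  have hab : [a, b] ∈ substIter randFib 1 a := by rw [substIter_succ]; exact Or.inl rfl
  have hba : [b, a] ∈ substIter randFib 1 a := by rw [substIter_succ]; exact Or.inr rfl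
  refine ⟨fun w hw => ?_, ?_⟩
  · obtain ⟨k, _, hv, p, s, rfl⟩ := RandFib.exists_infix_mem_of_legalW hw
    refine ⟨s.length, fun n hn => ?_⟩
    obtain ⟨K, y, c, d, z, hW, hlen, hcd⟩ :=
      RandFib.exists_ne_pair_mem_of_length_le (o := (p ++ w).length + n) hv
        (by simp only [List.length_append] at hn ⊢; omega)
    have hlegal : legalW randFib (w ++ (s ++ y) ++ [c, d]) := ⟨K, a, _, hW, p, z, by simp⟩
    refine ⟨s ++ y, by simp only [List.length_append] at hlen ⊢; omega, ?_⟩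
    cases c <;> cases d <;> simp_all
  · refine (ssubset_iff_of_subset ?_).2 ⟨[a, a], ⟨rfl, 2, a, [a, a, b], ?_, [], [b], rfl⟩, by simp⟩
    · rintro v (rfl | rfl)
      exacts [⟨rfl, 1, a, _, hab, List.infix_refl _⟩, ⟨rfl, 1, a, _, hba, List.infix_refl _⟩]
    · exact RandFib.append_mem_of_mem_b_of_mem_a (u := [a]) (RandFib.substIter_succ_b 0 ▸ rfl) hab
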